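/- arXiv:2504.06980 — 5 statements merged into one kernel-verified Lean document; each statement's English description precedes it below -/
import Mathlib

section
/- Unhappy-pair (witness) lemma: Let (M,d) be a metric space, Y a finite set of points of M, w : Y → ℝ≥0 a weight function, and x₁,…,x_k and o₁,…,o_k points of M. Let f, f* : Y × {1,…,k} → ℝ≥0 be assignments with ∑_{i=1}^k f(p,i) = ∑_{i=1}^k f*(p,i) = w(p) for every p ∈ Y, and write wcost(g, c) := ∑_{p∈Y} ∑_{i=1}^k g(p,i)·d(p,c_i). Suppose 0 < ε ≤ 1/2 and G is a real number such that wcost(f, x) ≤ (1+ε)·wcost(f*, x), wcost(f*, o) ≤ G, and wcost(f, x) > (1+5ε)·G. Then there exist p ∈ Y and i ∈ {1,…,k} such that f*(p,i) > 0 and d(p, x_i) > (1+ε)·d(p, o_i). -/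
/-- Unhappy-pair (witness) lemma. -/
theorem unhappy_pair_witness {M : Type*} [MetricSpace M] (Y : Finset M) (w : M → ℝ)
    (k : ℕ) (x o : Fin k → M) (f fstar : M → Fin k → ℝ)
    (hf_nonneg : ∀ p ∈ Y, ∀ i, 0 ≤ f p i)
    (hfstar_nonneg : ∀ p ∈ Y, ∀ i, 0 ≤ fstar p i)
    (hf_sum : ∀ p ∈ Y, ∑ i, f p i = w p)
    (hfstar_sum : ∀ p ∈ Y, ∑ i, fstar p i = w p)
    (ε G : ℝ) (hε0 : 0 < ε) (hε1 : ε ≤ 1 / 2)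
    (hnear : ∑ p ∈ Y, ∑ i, f p i * dist p (x i)
        ≤ (1 + ε) * ∑ p ∈ Y, ∑ i, fstar p i * dist p (x i))
    (hopt : ∑ p ∈ Y, ∑ i, fstar p i * dist p (o i) ≤ G)
    (hbig : (1 + 5 * ε) * G < ∑ p ∈ Y, ∑ i, f p i * dist p (x i)) :
    ∃ p ∈ Y, ∃ i : Fin k, 0 < fstar p i ∧ (1 + ε) * dist p (o i) < dist p (x i) := by
  by_contra hcon
  push_neg at hcon
  have key : ∑ p ∈ Y, ∑ i, fstar p i * dist p (x i)
      ≤ (1 + ε) * ∑ p ∈ Y, ∑ i, fstar p i * dist p (o i) := by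
    rw [Finset.mul_sum]
    refine Finset.sum_le_sum fun p hp => ?_
    rw [Finset.mul_sum]
    refine Finset.sum_le_sum fun i _ => ?_
    rcases (hfstar_nonneg p hp i).lt_or_eq with h | h
    · have h2 := hcon p hp i h
      nlinarith [dist_nonneg (x := p) (y := o i)]
    · rw [← h]; simp
  have hG0 : 0 ≤ ∑ p ∈ Y, ∑ i, fstar p i * dist p (o i) := by
    refine Finset.sum_nonneg fun p hp => Finset.sum_nonneg fun i _ => ?_
    exact mul_nonneg (hfstar_nonneg p hp i) dist_nonneg
  have hG : 0 ≤ G := le_trans hG0 hopt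
  have h1 : ∑ p ∈ Y, ∑ i, f p i * dist p (x i)
      ≤ (1 + ε) * ((1 + ε) * ∑ p ∈ Y, ∑ i, fstar p i * dist p (o i)) :=
    le_trans hnear (mul_le_mul_of_nonneg_left key (by linarith))
  have h2 : (1 + ε) * ((1 + ε) * ∑ p ∈ Y, ∑ i, fstar p i * dist p (o i))
      ≤ (1 + ε) * ((1 + ε) * G) :=
    mul_le_mul_of_nonneg_left (mul_le_mul_of_nonneg_left hopt (by linarith)) (by linarith)
  have h3 : (1 + ε) * ((1 + ε) * G) ≤ (1 + 5 * ε) * G := by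
    nlinarith [mul_nonneg hε0.le hG]
  linarith
end

section
/- Properties of an unhappy pair: Let (M,d) be a metric space, 0 < ε ≤ 1/2, and let r, r̃ be reals with 0 < r ≤ r̃ < (1+ε)·r. Let p, p*, x, o be points of M with d(p*, x) ≤ (1+ε)·r̃, d(p*, o) ≤ r̃, d(p, o) ≥ r, and d(p, x) > (1+ε)·d(p, o). Then d(p, x) > r̃ and d(p, p*) ≤ (6/ε)·r̃. -/
/-- Properties of an unhappy pair. -/
theorem unhappy_pair_properties {M : Type*} [MetricSpace M]
    (ε r rt : ℝ) (hε0 : 0 < ε) (hε1 : ε ≤ 1 / 2)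
    (hr0 : 0 < r) (hrrt : r ≤ rt) (hrt : rt < (1 + ε) * r)
    (p pstar x o : M)
    (hx : dist pstar x ≤ (1 + ε) * rt)
    (ho : dist pstar o ≤ rt)
    (hpo : r ≤ dist p o)
    (hunhappy : (1 + ε) * dist p o < dist p x) :
    rt < dist p x ∧ dist p pstar ≤ (6 / ε) * rt := by
  have t1 := dist_triangle p pstar x
  have t2 := dist_triangle p pstar o
  have hps : dist p pstar = dist pstar p := dist_comm _ _
  have h0 : 0 < rt := lt_of_lt_of_le hr0 hrrt
  constructor
  · nlinarith
  · rw [div_mul_eq_mul_div, le_div_iff₀ hε0]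
    have t3 := dist_triangle p o pstar
    rw [dist_comm o pstar] at t3
    nlinarith [mul_nonneg hε0.le (dist_nonneg (x:=p) (y:=o))]
end

section
/- Far points cannot be unhappy: Let (M,d) be a metric space, 0 < ε ≤ 1/2, r̃ ≥ 0 a real, and p, p*, x, o points of M. If d(p*, x) ≤ (1+ε)·r̃, d(p*, o) ≤ r̃, and d(p, p*) ≥ (6/ε)·r̃, then d(p, x) ≤ (1+ε)·d(p, o). -/
/-- Far points cannot be unhappy. -/
theorem far_points_happy {M : Type*} [MetricSpace M]
    (ε rt : ℝ) (hε0 : 0 < ε) (hε1 : ε ≤ 1 / 2) (hrt : 0 ≤ rt)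
    (p pstar x o : M)
    (hx : dist pstar x ≤ (1 + ε) * rt)
    (ho : dist pstar o ≤ rt)
    (hfar : (6 / ε) * rt ≤ dist p pstar) :
    dist p x ≤ (1 + ε) * dist p o := by
  have t1 : dist p x ≤ dist p pstar + dist pstar x := dist_triangle _ _ _
  have t2 : dist p pstar ≤ dist p o + dist o pstar := dist_triangle _ _ _
  have ho' : dist o pstar ≤ rt := by rwa [dist_comm]
  have h6 : 6 * rt ≤ ε * dist p pstar := by
    have := hfar
    rw [div_mul_eq_mul_div, div_le_iff₀ hε0] at this
    linarith [mul_comm (dist p pstar) ε]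
  nlinarith [dist_nonneg (x := p) (y := pstar)]
end

section
/- Voronoi version (localization of improvable points): Let (M,d) be a metric space, 0 < ε ≤ 1/2, and k ≥ 1 a natural number. For each i ∈ {1,…,k} let p*_i, x_i, o_i be points of M and r̃_i ≥ 0 a real with d(p*_i, x_i) ≤ (1+ε)·r̃_i and d(p*_i, o_i) ≤ r̃_i. If a point p ∈ M satisfies d(p, p*_i) ≥ (6/ε)·r̃_i for every i ∈ {1,…,k}, then min_{i∈{1,…,k}} d(p, x_i) ≤ (1+ε) · min_{i∈{1,…,k}} d(p, o_i). -/
/-- Voronoi version: localization of improvable points. -/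
theorem voronoi_localization {M : Type*} [MetricSpace M]
    (ε : ℝ) (hε0 : 0 < ε) (hε1 : ε ≤ 1 / 2)
    (k : ℕ) (hk : 1 ≤ k)
    (pstar x o : Fin k → M) (rt : Fin k → ℝ)
    (hrt : ∀ i, 0 ≤ rt i)
    (hx : ∀ i, dist (pstar i) (x i) ≤ (1 + ε) * rt i)
    (ho : ∀ i, dist (pstar i) (o i) ≤ rt i)
    (p : M)
    (hfar : ∀ i, (6 / ε) * rt i ≤ dist p (pstar i)) :
    Finset.univ.inf' ⟨⟨0, hk⟩, Finset.mem_univ _⟩ (fun i => dist p (x i))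
      ≤ (1 + ε) * Finset.univ.inf' ⟨⟨0, hk⟩, Finset.mem_univ _⟩ (fun i => dist p (o i)) := by
  obtain ⟨j, -, hj⟩ := Finset.exists_mem_eq_inf' ⟨⟨0, hk⟩, Finset.mem_univ _⟩
    (fun i => dist p (o i))
  rw [hj]
  have h1 : Finset.univ.inf' ⟨⟨0, hk⟩, Finset.mem_univ _⟩ (fun i => dist p (x i))
      ≤ dist p (x j) := Finset.inf'_le _ (Finset.mem_univ j)
  refine h1.trans ?_
  have hpx : dist p (x j) ≤ dist p (pstar j) + (1 + ε) * rt j :=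
    (dist_triangle p (pstar j) (x j)).trans (by linarith [hx j])
  have hpo : dist p (pstar j) - rt j ≤ dist p (o j) := by
    have := dist_triangle p (o j) (pstar j)
    have h2 := ho j
    rw [dist_comm (o j)] at this
    linarith
  have hD := hfar j
  have hrtj := hrt j
  have hDε : 6 * rt j ≤ ε * dist p (pstar j) := by
    calc 6 * rt j = ε * (6 / ε * rt j) := by field_simp
    _ ≤ ε * dist p (pstar j) := mul_le_mul_of_nonneg_left hD hε0.le
  nlinarith [hrt j, dist_nonneg (x := p) (y := pstar j)]
end

section
/- Heavy-witness sampling claim: Let Y be a finite set and w, a, b : Y → ℝ≥0. Let 0 < ε ≤ 1/2 and let G be a real with ∑_{p∈Y} w(p)·b(p) ≤ G. If ∑_{p∈Y} w(p)·a(p) > (1+5ε)·G, then the set W := {p ∈ Y : a(p) > (1+ε)·b(p)} satisfies ∑_{p∈W} w(p)·a(p) ≥ (ε/10) · ∑_{p∈Y} w(p)·a(p). -/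
/-- Heavy-witness sampling claim. -/
theorem heavy_witness_sampling {α : Type*} (Y : Finset α) (w a b : α → ℝ)
    (hw : ∀ p ∈ Y, 0 ≤ w p) (ha : ∀ p ∈ Y, 0 ≤ a p) (hb : ∀ p ∈ Y, 0 ≤ b p)
    (ε G : ℝ) (hε0 : 0 < ε) (hε1 : ε ≤ 1 / 2)
    (hG : ∑ p ∈ Y, w p * b p ≤ G)
    (hbig : (1 + 5 * ε) * G < ∑ p ∈ Y, w p * a p) :
    (ε / 10) * ∑ p ∈ Y, w p * a p
      ≤ ∑ p ∈ Y.filter (fun p => (1 + ε) * b p < a p), w p * a p := by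
  have hB0 : 0 ≤ ∑ p ∈ Y, w p * b p :=
    Finset.sum_nonneg fun p hp => mul_nonneg (hw p hp) (hb p hp)
  have hG0 : 0 ≤ G := le_trans hB0 hG
  -- bound on the complement
  have h1 : ∑ p ∈ Y.filter (fun p => ¬ (1 + ε) * b p < a p), w p * a p
      ≤ (1 + ε) * ∑ p ∈ Y, w p * b p := by
    have : ∑ p ∈ Y.filter (fun p => ¬ (1 + ε) * b p < a p), w p * a p
        ≤ ∑ p ∈ Y.filter (fun p => ¬ (1 + ε) * b p < a p), (1 + ε) * (w p * b p) := by
      apply Finset.sum_le_sum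
      intro p hp
      obtain ⟨hpY, hc⟩ := Finset.mem_filter.mp hp
      push_neg at hc
      calc w p * a p ≤ w p * ((1 + ε) * b p) :=
            mul_le_mul_of_nonneg_left hc (hw p hpY)
        _ = (1 + ε) * (w p * b p) := by ring
    refine this.trans ?_
    rw [← Finset.mul_sum]
    apply mul_le_mul_of_nonneg_left _ (by linarith)
    exact Finset.sum_le_sum_of_subset_of_nonneg (Finset.filter_subset _ _)
      fun p hp _ => mul_nonneg (hw p hp) (hb p hp)
  have hsplit := Finset.sum_filter_add_sum_filter_not Y
    (fun p => (1 + ε) * b p < a p) (fun p => w p * a p)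
  have h2 : (1 + ε) * ∑ p ∈ Y, w p * b p ≤ (1 + ε) * G :=
    mul_le_mul_of_nonneg_left hG (by linarith)
  nlinarith [hsplit, h1, h2, hbig, mul_lt_mul_of_pos_left hbig hε0, mul_nonneg hε0.le hG0, mul_nonneg (mul_nonneg hε0.le hε0.le) hG0]
end
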